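/- arXiv:1010.2356 — 3 statements merged into one kernel-verified Lean document; each statement's English description precedes it below -/
import Mathlib

section
/- For every integer K ≥ 1 and every θ ∈ B(π) with θ ≠ 0, one has |∑_{x ∈ D_K} e^{i θ·x}| ≤ 4(K+1)‖θ‖_∞^{-1}. -/
open Filter MeasureTheory Real Finset
open scoped BigOperators

noncomputable section

/-- `T_k = (−k/2, k/2]² ∩ ℤ²`. -/
def Tset (k : ℝ) : Finset (ℤ × ℤ) :=
  Finset.Ioc ⌊-k / 2⌋ ⌊k / 2⌋ ×ˢ Finset.Ioc ⌊-k / 2⌋ ⌊k / 2⌋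

/-- `Λ_k = [−k/2, k/2]² ∩ ℤ²`. -/
def Lam (k : ℝ) : Finset (ℤ × ℤ) :=
  Finset.Icc ⌈-k / 2⌉ ⌊k / 2⌋ ×ˢ Finset.Icc ⌈-k / 2⌉ ⌊k / 2⌋

open scoped Classical in
/-- `D_k = {x ∈ ℤ² : |x| ≤ k/2}` (Euclidean norm). -/
def Dset (k : ℝ) : Finset (ℤ × ℤ) :=
  (Lam k).filter fun x => Real.sqrt ((x.1 : ℝ) ^ 2 + (x.2 : ℝ) ^ 2) ≤ k / 2

/-- sup (ℓ∞) norm on ℝ². -/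
def supNorm (θ : ℝ × ℝ) : ℝ := max |θ.1| |θ.2|

/-- the closed ℓ∞-ball `B(r)` in ℝ². -/
def Bset (r : ℝ) : Set (ℝ × ℝ) := {θ | supNorm θ ≤ r}

/-- squared Euclidean norm `|θ|²` on ℝ². -/
def sqNormR (θ : ℝ × ℝ) : ℝ := θ.1 ^ 2 + θ.2 ^ 2

/-- squared Euclidean norm `|y|²` of a lattice point. -/
def sqNorm (y : ℤ × ℤ) : ℝ := (y.1 : ℝ) ^ 2 + (y.2 : ℝ) ^ 2

/-- dot product `θ · x` of θ ∈ ℝ² and x ∈ ℤ². -/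
def dotP (θ : ℝ × ℝ) (x : ℤ × ℤ) : ℝ := θ.1 * x.1 + θ.2 * x.2

/-- `e^{iθ·x}`. -/
def cexp (θ : ℝ × ℝ) (x : ℤ × ℤ) : ℂ := Complex.exp (Complex.I * (dotP θ x : ℂ))

/-- `e^{2πi x·y/L}`. -/
def eL (L : ℕ) (x y : ℤ × ℤ) : ℂ :=
  Complex.exp (2 * (π : ℂ) * Complex.I * ((x.1 * y.1 + x.2 * y.2 : ℤ) : ℂ) / (L : ℂ))

/-- the filter of large even natural numbers. -/
def evenAtTop : Filter ℕ := Filter.atTop ⊓ Filter.principal {n | Even n}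

/-- the Fourier point `2πy/L ∈ ℝ²`. -/
def fourierTheta (L : ℕ) (y : ℤ × ℤ) : ℝ × ℝ := (2 * π * y.1 / L, 2 * π * y.2 / L)

/-- the characteristic function `φ(θ) = ∑_x e^{iθ·x} q(x)` of a jump distribution
supported in `Λ_m`; it is real-valued by symmetry, so we take the real part. -/
def phiOf (m : ℕ) (qq : ℤ × ℤ → ℝ) (θ : ℝ × ℝ) : ℝ :=
  (∑ x ∈ Lam m, cexp θ x * (qq x : ℂ)).re

/-!
By the symmetry `(x₁, x₂) ↦ (x₂, x₁)` of `D_K` we may assume `‖θ‖_∞ = |θ₁|`. Slicing `D_K` into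
rows `x₂ = j`, each row is an interval of integers, so its contribution is a geometric sum in
`e^{iθ₁}`, of modulus at most `2 / |e^{iθ₁} - 1| ≤ π / |θ₁|` by Jordan's inequality
`|sin (t/2)| ≥ |t| / π` for `|t| ≤ π`. There are at most `K + 1` rows, and `π ≤ 4`.
-/

open Complex in
theorem mul_abs_le_norm_exp_I_mul_ofReal_sub_one {x : ℝ} (hx : |x| ≤ π) :
    2 / π * |x| ≤ ‖exp (I * x) - 1‖ := by
  have hx2 : |x / 2| ≤ π / 2 := by rw [abs_div, abs_two]; linarith
  rw [norm_exp_I_mul_ofReal_sub_one, Real.norm_eq_abs, abs_mul, abs_two]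
  have := Real.mul_abs_le_abs_sin hx2
  rw [abs_div, abs_two] at this
  linarith

theorem norm_sum_Icc_zpow_le {z : ℂ} (hz : ‖z‖ = 1) (hz1 : z ≠ 1) (p q : ℤ) :
    ‖∑ n ∈ Icc p q, z ^ n‖ ≤ 2 / ‖z - 1‖ := by
  have hz0 : z ≠ 0 := by rintro rfl; simp at hz
  rw [Int.Icc_eq_finset_map, sum_map]
  simp only [Function.Embedding.trans_apply, Nat.castEmbedding_apply, addLeftEmbedding_apply,
    zpow_add₀ hz0, zpow_natCast, ← mul_sum, geom_sum_eq hz1, norm_mul, norm_zpow, hz, one_zpow,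
    one_mul, norm_div]
  gcongr
  calc ‖z ^ (q + 1 - p).toNat - 1‖ ≤ ‖z ^ (q + 1 - p).toNat‖ + ‖(1 : ℂ)‖ := norm_sub_le _ _
    _ = 2 := by rw [norm_pow, hz]; norm_num

open Complex in
theorem norm_sum_Icc_exp_le {t : ℝ} (ht0 : t ≠ 0) (ht : |t| ≤ π) (p q : ℤ) :
    ‖∑ n ∈ Icc p q, exp (I * (t * n))‖ ≤ π / |t| := by
  have hlow := mul_abs_le_norm_exp_I_mul_ofReal_sub_one ht
  have hpos : 0 < 2 / π * |t| := by positivity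
  have hz1 : exp (I * t) ≠ 1 := fun h => by simp [h] at hlow; linarith
  have hz : ‖exp (I * t)‖ = 1 := norm_exp_I_mul_ofReal t
  calc ‖∑ n ∈ Icc p q, exp (I * (t * n))‖ = ‖∑ n ∈ Icc p q, exp (I * t) ^ n‖ := by
        simp only [← exp_int_mul]; ring_nf
    _ ≤ 2 / ‖exp (I * t) - 1‖ := norm_sum_Icc_zpow_le hz hz1 p q
    _ ≤ 2 / (2 / π * |t|) := by gcongr
    _ = π / |t| := by field_simp

theorem Int.mem_Icc_ceil_neg_floor_iff (r : ℝ) (n : ℤ) : n ∈ Icc ⌈-r⌉ ⌊r⌋ ↔ |(n : ℝ)| ≤ r := by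
  rw [mem_Icc, Int.ceil_le, Int.le_floor, abs_le]

theorem Int.card_Icc_ceil_neg_floor_le {r : ℝ} (hr : 0 ≤ r) :
    (#(Icc ⌈-r⌉ ⌊r⌋) : ℝ) ≤ 2 * r + 1 := by
  have hfloor : 0 ≤ ⌊r⌋ := Int.floor_nonneg.mpr hr
  have hcard : (#(Icc ⌈-r⌉ ⌊r⌋) : ℤ) = 2 * ⌊r⌋ + 1 := by
    rw [Int.ceil_neg, Int.card_Icc, Int.toNat_of_nonneg (by omega)]; ring
  have hcard' : (#(Icc ⌈-r⌉ ⌊r⌋) : ℝ) = 2 * ⌊r⌋ + 1 := by exact_mod_cast hcard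
  linarith [Int.floor_le r]

theorem sum_Dset_eq_sum_rows (k : ℝ) (f : ℤ × ℤ → ℂ) :
    ∑ x ∈ Dset k, f x = ∑ j ∈ Icc ⌈-k / 2⌉ ⌊k / 2⌋,
      ∑ n ∈ (Icc ⌈-k / 2⌉ ⌊k / 2⌋).filter (fun n : ℤ => √((n : ℝ) ^ 2 + (j : ℝ) ^ 2) ≤ k / 2),
        f (n, j) := by
  rw [Dset, Lam, sum_filter, sum_product, sum_comm]
  simp only [sum_filter]

theorem Dset_row_eq_Icc {k : ℝ} {j : ℤ} (hj : |(j : ℝ)| ≤ k / 2) :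
    (Icc ⌈-k / 2⌉ ⌊k / 2⌋).filter (fun n : ℤ => √((n : ℝ) ^ 2 + (j : ℝ) ^ 2) ≤ k / 2) =
      Icc ⌈-√((k / 2) ^ 2 - j ^ 2)⌉ ⌊√((k / 2) ^ 2 - j ^ 2)⌋ := by
  have hk : 0 ≤ k / 2 := (abs_nonneg _).trans hj
  have hjsq : (j : ℝ) ^ 2 ≤ (k / 2) ^ 2 := sq_le_sq' (abs_le.mp hj).1 (abs_le.mp hj).2
  have hs : √((k / 2) ^ 2 - j ^ 2) ≤ k / 2 :=
    Real.sqrt_le_iff.mpr ⟨hk, sub_le_self _ (sq_nonneg _)⟩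
  ext n
  rw [mem_filter, neg_div, Int.mem_Icc_ceil_neg_floor_iff, Int.mem_Icc_ceil_neg_floor_iff,
    Real.sqrt_le_left hk, Real.le_sqrt (abs_nonneg _) (by linarith), sq_abs]
  constructor
  · rintro ⟨-, h⟩; linarith
  · intro h; exact ⟨(Real.abs_le_sqrt h).trans hs, by linarith⟩

theorem cexp_eq_exp_mul_exp (θ : ℝ × ℝ) (n j : ℤ) :
    cexp θ (n, j) =
      Complex.exp (Complex.I * (θ.2 * j : ℝ)) * Complex.exp (Complex.I * (θ.1 * n)) := by
  rw [cexp, dotP, ← Complex.exp_add]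
  push_cast
  ring_nf

theorem norm_sum_Dset_cexp_le {k : ℝ} (hk : 0 ≤ k) {θ : ℝ × ℝ} (h0 : θ.1 ≠ 0)
    (hπ : |θ.1| ≤ π) : ‖∑ x ∈ Dset k, cexp θ x‖ ≤ (k + 1) * (π / |θ.1|) := by
  have hrow : ∀ j ∈ Icc ⌈-k / 2⌉ ⌊k / 2⌋,
      ‖∑ n ∈ (Icc ⌈-k / 2⌉ ⌊k / 2⌋).filter (fun n : ℤ => √((n : ℝ) ^ 2 + (j : ℝ) ^ 2) ≤ k / 2),
        cexp θ (n, j)‖ ≤ π / |θ.1| := by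
    intro j hj
    rw [neg_div, Int.mem_Icc_ceil_neg_floor_iff] at hj
    rw [Dset_row_eq_Icc hj]
    simp only [cexp_eq_exp_mul_exp, ← mul_sum, norm_mul, Complex.norm_exp_I_mul_ofReal,
      one_mul]
    exact norm_sum_Icc_exp_le h0 hπ _ _
  have hcard : (#(Icc ⌈-k / 2⌉ ⌊k / 2⌋) : ℝ) ≤ k + 1 := by
    have := Int.card_Icc_ceil_neg_floor_le (div_nonneg hk two_pos.le)
    rw [neg_div]; linarith
  calc ‖∑ x ∈ Dset k, cexp θ x‖ ≤ ∑ _j ∈ Icc ⌈-k / 2⌉ ⌊k / 2⌋, π / |θ.1| := by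
        rw [sum_Dset_eq_sum_rows]; exact (norm_sum_le _ _).trans (sum_le_sum hrow)
    _ = #(Icc ⌈-k / 2⌉ ⌊k / 2⌋) * (π / |θ.1|) := by rw [sum_const, nsmul_eq_mul]
    _ ≤ (k + 1) * (π / |θ.1|) := by gcongr

theorem swap_mem_Dset {k : ℝ} {x : ℤ × ℤ} : x.swap ∈ Dset k ↔ x ∈ Dset k := by
  simp only [Dset, Lam, mem_filter, mem_product, Prod.fst_swap, Prod.snd_swap, add_comm]
  tauto

theorem cexp_swap (θ : ℝ × ℝ) (x : ℤ × ℤ) : cexp θ.swap x = cexp θ x.swap := by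
  simp only [cexp, dotP, Prod.fst_swap, Prod.snd_swap, add_comm]

theorem sum_Dset_cexp_swap (k : ℝ) (θ : ℝ × ℝ) :
    ∑ x ∈ Dset k, cexp θ.swap x = ∑ x ∈ Dset k, cexp θ x :=
  sum_equiv (Equiv.prodComm ℤ ℤ) (fun _ => swap_mem_Dset.symm) fun x _ => cexp_swap θ x

theorem supNorm_swap (θ : ℝ × ℝ) : supNorm θ.swap = supNorm θ := max_comm _ _

theorem sum_exp_Dset_bound_general (K : ℕ) (θ : ℝ × ℝ)
    (hθB : supNorm θ ≤ π) (hθ : θ ≠ 0) :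
    ‖∑ x ∈ Dset K, cexp θ x‖ ≤ 4 * (K + 1) * (supNorm θ)⁻¹ := by
  wlog h : |θ.2| ≤ |θ.1| generalizing θ
  · rw [← sum_Dset_cexp_swap, ← supNorm_swap]
    exact this θ.swap (by rwa [supNorm_swap])
      (by rwa [Ne, Prod.swap_eq_iff_eq_swap, Prod.swap_zero]) (not_le.mp h).le
  have hsup : supNorm θ = |θ.1| := max_eq_left h
  have h0 : θ.1 ≠ 0 := fun h0 => hθ (Prod.ext h0 (abs_nonpos_iff.mp (by simpa [h0] using h)))
  rw [hsup] at hθB ⊢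
  calc ‖∑ x ∈ Dset K, cexp θ x‖ ≤ (K + 1) * (π / |θ.1|) :=
        norm_sum_Dset_cexp_le K.cast_nonneg h0 hθB
    _ ≤ (K + 1) * (4 / |θ.1|) := by gcongr; exact pi_le_four
    _ = 4 * (K + 1) * |θ.1|⁻¹ := by ring

/-- For every integer `K ≥ 1` and every `θ ∈ B(π)` with `θ ≠ 0`,
`|∑_{x ∈ D_K} e^{iθ·x}| ≤ 4(K+1)‖θ‖_∞⁻¹`. -/
theorem sum_exp_Dset_bound (K : ℕ) (hK : 1 ≤ K) (θ : ℝ × ℝ)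
    (hθB : supNorm θ ≤ π) (hθ : θ ≠ 0) :
    ‖∑ x ∈ Dset K, cexp θ x‖ ≤ 4 * (K + 1) * (supNorm θ)⁻¹ :=
  sum_exp_Dset_bound_general K θ hθB hθ
end
end

section
/- Let f be a positive continuous function on B(1/2) = {x ∈ ℝ² : ‖x‖_∞ ≤ 1/2} with f(x₁,x₂) = f(x₂,x₁) = f(−x₁,x₂), and for each even positive integer M let q_M(x) = c_M f(x/M) u_M(x) with c_M > 0 chosen so that ∑_x q_M(x) = 1, and let φ_M(θ) = ∑_{x ∈ ℤ²} e^{iθ·x} q_M(x). Set c₀ = 1/∫_{B(1/2)} f(x) dx and σ² = c₀ ∫_{B(1/2)} x₁² f(x) dx. Then for every ε > 0 there exist δ > 0 and M₀ such that for all even M ≥ M₀ and all θ ∈ B(δ/M) with θ ≠ 0, the ratio (1 − φ_M(θ)) / (σ² M² |θ|² / 2) lies in the interval (1−ε, 1+ε). -/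
open Filter MeasureTheory Real Finset
open scoped BigOperators

noncomputable section

/-- Condition (P0): `q` is a symmetric probability distribution supported in
`Λ'_m = Λ_m \ {0}`, with values in [0,1] and equal, positive coordinate variances. -/
def CondP0 (m : ℕ) (qq : ℤ × ℤ → ℝ) : Prop :=
  (∀ x, 0 ≤ qq x ∧ qq x ≤ 1) ∧
  (∀ x, x ∉ (Lam m).erase 0 → qq x = 0) ∧
  (∑ x ∈ (Lam m).erase 0, qq x = 1) ∧
  (∀ x, qq (-x) = qq x) ∧
  (∑ x ∈ Lam m, (x.1 : ℝ) ^ 2 * qq x = ∑ x ∈ Lam m, (x.2 : ℝ) ^ 2 * qq x) ∧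
  (0 < ∑ x ∈ Lam m, (x.1 : ℝ) ^ 2 * qq x)

/-- Condition (P1) with constant `σ² = σ2`. -/
def CondP1 (M : ℕ → ℕ) (q : ℕ → ℤ × ℤ → ℝ) (σ2 : ℝ) : Prop :=
  ∀ ε > (0 : ℝ), ∃ δ > (0 : ℝ), ∀ᶠ L in evenAtTop, ∀ θ : ℝ × ℝ, θ ≠ 0 →
    supNorm θ ≤ δ / M L →
    (1 - phiOf (M L) (q L) θ) / (σ2 * (M L : ℝ) ^ 2 * sqNormR θ / 2)
      ∈ Set.Ioo (1 - ε) (1 + ε)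

/-- Condition (P2). -/
def CondP2 (M : ℕ → ℕ) (q : ℕ → ℤ × ℤ → ℝ) : Prop :=
  ∀ δ > (0 : ℝ), ∃ δ' > (0 : ℝ), ∃ ζ > (0 : ℝ), ∀ᶠ L in evenAtTop, ∀ θ : ℝ × ℝ,
    supNorm θ ≤ δ' → ¬ supNorm θ ≤ δ / M L → 1 - phiOf (M L) (q L) θ > ζ

/-- Condition (P3). -/
def CondP3 (M : ℕ → ℕ) (q : ℕ → ℤ × ℤ → ℝ) : Prop :=
  ∀ ε > (0 : ℝ), ∀ a > (0 : ℝ), ∀ᶠ L in evenAtTop, ∀ θ : ℝ × ℝ,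
    supNorm θ ≤ π → ¬ supNorm θ ≤ a → |phiOf (M L) (q L) θ| < ε

/-- `G_L(x,λ) = L⁻² ∑_{y ∈ T_L} e^{2πi x·y/L} / (1 + λ − φ_{M_L}(2πy/L))`. -/
def Gfun (M : ℕ → ℕ) (q : ℕ → ℤ × ℤ → ℝ) (L : ℕ) (x : ℤ × ℤ) (lam : ℝ) : ℂ :=
  ((L : ℂ) ^ 2)⁻¹ * ∑ y ∈ Tset L,
    eL L x y / ((1 + lam - phiOf (M L) (q L) (fourierTheta L y) : ℝ) : ℂ)

open scoped Classical in
/-- the annulus `A_L(α, v)`. -/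
def Aset (L : ℕ) (α v : ℝ) : Finset (ℤ × ℤ) :=
  if α = 0 then (Tset v).erase 0
  else if α = 1 then Tset L \ Tset (L / v)
  else Tset ((L : ℝ) ^ α * v) \ Tset ((L : ℝ) ^ α / v)

/-- the uniform distribution `u_m` on `Λ'_m = Λ_m \ {0}`. -/
def uunif (m : ℕ) (x : ℤ × ℤ) : ℝ :=
  if x ∈ (Lam m).erase 0 then (((Lam m).erase 0).card : ℝ)⁻¹ else 0

/-- `q_M(x) = c_M f(x/M) u_M(x)`. -/
def qMf (f : ℝ × ℝ → ℝ) (c : ℕ → ℝ) (m : ℕ) (x : ℤ × ℤ) : ℝ :=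
  c m * f ((x.1 : ℝ) / m, (x.2 : ℝ) / m) * uunif m x

/-!
By the symmetries of `f`, the quadratic form `∑ₓ q_M(x) (θ·x)²` equals `A_M |θ|²` with
`A_M = ∑ₓ x₁² q_M(x)`. For `θ ∈ B(δ/M)` every phase satisfies `|θ·x| ≤ δ`, so the Taylor bound
`|1 - cos t - t²/2| ≤ 5t⁴/96` gives `1 - φ_M(θ) = (A_M |θ|² / 2)(1 + O(δ²))`. The normalisation
forces `q_M(x) = f(x/M) / ∑_{y ∈ Λ'_M} f(y/M)`, so `A_M / M²` is a quotient of Riemann sums of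
`x₁² f` and `f` over the grid `Λ_M / M`, which tends to `σ²`. The Riemann sums converge by dominated
convergence applied to the step functions that are constant on the cells of the grid.
-/

open scoped Topology

lemma Bset_eq_Icc_prod (r : ℝ) : Bset r = Set.Icc (-r) r ×ˢ Set.Icc (-r) r := by
  ext θ
  simp only [Bset, supNorm, Set.mem_ofPred_eq, max_le_iff, abs_le, Set.mem_prod, Set.mem_Icc]

lemma isCompact_Bset (r : ℝ) : IsCompact (Bset r) := by
  rw [Bset_eq_Icc_prod]
  exact isCompact_Icc.prod isCompact_Icc

/-- Unlike `B(1/2)`, the square `(-1/2, 1/2]²` is tiled exactly by the cells `latticeCell (2k) x`,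
`x ∈ halfOpenBox k`; the two differ by a null set. -/
def halfOpenSquare : Set (ℝ × ℝ) := Set.Ioc (-(1 / 2)) (1 / 2) ×ˢ Set.Ioc (-(1 / 2)) (1 / 2)

lemma halfOpenSquare_subset_Bset : halfOpenSquare ⊆ Bset (1 / 2) := by
  rw [Bset_eq_Icc_prod]
  exact Set.prod_mono Set.Ioc_subset_Icc_self Set.Ioc_subset_Icc_self

lemma halfOpenSquare_ae_eq_Bset : halfOpenSquare =ᵐ[volume] Bset (1 / 2) := by
  rw [Bset_eq_Icc_prod, Measure.volume_eq_prod]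
  exact Measure.set_prod_ae_eq Ioc_ae_eq_Icc Ioc_ae_eq_Icc

lemma abs_le_of_mem_Lam {k : ℝ} {x : ℤ × ℤ} (hx : x ∈ Lam k) :
    |(x.1 : ℝ)| ≤ k / 2 ∧ |(x.2 : ℝ)| ≤ k / 2 := by
  simp only [Lam, Finset.mem_product, Finset.mem_Icc, Int.ceil_le, Int.le_floor] at hx
  refine ⟨abs_le.2 ⟨?_, ?_⟩, abs_le.2 ⟨?_, ?_⟩⟩ <;> linarith [hx.1.1, hx.1.2, hx.2.1, hx.2.2]

lemma zero_mem_Lam (m : ℕ) : (0 : ℤ × ℤ) ∈ Lam m := by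
  have h : (0 : ℝ) ≤ m / 2 := by positivity
  simp only [Lam, Finset.mem_product, Finset.mem_Icc, Prod.fst_zero, Prod.snd_zero,
    Int.ceil_le, Int.le_floor, Int.cast_zero, and_self]
  constructor <;> linarith

lemma swap_mem_Lam {k : ℝ} {x : ℤ × ℤ} (hx : x ∈ Lam k) : x.swap ∈ Lam k := by
  simp only [Lam, Finset.mem_product, Prod.fst_swap, Prod.snd_swap] at hx ⊢
  exact hx.symm

lemma neg_fst_mem_Lam {k : ℝ} {x : ℤ × ℤ} (hx : x ∈ Lam k) : (-x.1, x.2) ∈ Lam k := by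
  simp only [Lam, Finset.mem_product, Finset.mem_Icc, neg_div, Int.ceil_neg] at hx ⊢
  omega

lemma Lam_two_mul (k : ℕ) :
    Lam (2 * k : ℕ) = Finset.Icc (-(k : ℤ)) k ×ˢ Finset.Icc (-(k : ℤ)) k := by
  have h : ((2 * k : ℕ) : ℝ) / 2 = ((k : ℤ) : ℝ) := by push_cast; ring
  rw [Lam, neg_div, h, ← Int.cast_neg, Int.ceil_intCast, Int.floor_intCast]

def rescale (m : ℕ) (x : ℤ × ℤ) : ℝ × ℝ := ((x.1 : ℝ) / m, (x.2 : ℝ) / m)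

lemma rescale_mem_Bset {m : ℕ} {x : ℤ × ℤ} (hx : x ∈ Lam m) : rescale m x ∈ Bset (1 / 2) := by
  obtain ⟨h1, h2⟩ := abs_le_of_mem_Lam hx
  rcases (Nat.cast_nonneg (α := ℝ) m).eq_or_lt with hm | hm
  · simp [rescale, ← hm, Bset, supNorm]
  · simp only [Bset, supNorm, rescale, Set.mem_ofPred_eq, max_le_iff, abs_div, Nat.abs_cast,
      div_le_iff₀ hm]
    constructor <;> linarith

def latticeSum (g : ℝ × ℝ → ℝ) (m : ℕ) : ℝ := ((m : ℝ) ^ 2)⁻¹ * ∑ x ∈ Lam m, g (rescale m x)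

def halfOpenBox (k : ℕ) : Finset (ℤ × ℤ) := Finset.Ioc (-(k : ℤ)) k ×ˢ Finset.Ioc (-(k : ℤ)) k

def latticeCell (m : ℕ) (x : ℤ × ℤ) : Set (ℝ × ℝ) :=
  Set.Ioc (((x.1 : ℝ) - 1) / m) ((x.1 : ℝ) / m) ×ˢ Set.Ioc (((x.2 : ℝ) - 1) / m) ((x.2 : ℝ) / m)

def latticeRound (m : ℕ) (y : ℝ × ℝ) : ℤ × ℤ := (⌈m * y.1⌉, ⌈m * y.2⌉)

lemma halfOpenBox_subset_Lam (k : ℕ) : halfOpenBox k ⊆ Lam (2 * k : ℕ) := by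
  rw [Lam_two_mul]
  exact Finset.product_subset_product Finset.Ioc_subset_Icc_self Finset.Ioc_subset_Icc_self

lemma card_Lam_sdiff_halfOpenBox (k : ℕ) : #(Lam (2 * k : ℕ) \ halfOpenBox k) = 4 * k + 1 := by
  rw [Finset.card_sdiff_of_subset (halfOpenBox_subset_Lam k), Lam_two_mul, halfOpenBox,
    Finset.card_product, Finset.card_product, Int.card_Icc, Int.card_Ioc]
  have h1 : ((k : ℤ) + 1 - -(k : ℤ)).toNat = 2 * k + 1 := by omega
  have h2 : ((k : ℤ) - -(k : ℤ)).toNat = 2 * k := by omega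
  rw [h1, h2]
  ring_nf
  omega

lemma mem_latticeCell_iff {m : ℕ} (hm : 0 < m) {x : ℤ × ℤ} {y : ℝ × ℝ} :
    y ∈ latticeCell m x ↔ latticeRound m y = x := by
  have hm' : (0 : ℝ) < m := Nat.cast_pos.2 hm
  simp only [latticeCell, latticeRound, Set.mem_prod, Set.mem_Ioc, Prod.ext_iff, Int.ceil_eq_iff,
    div_lt_iff₀ hm', le_div_iff₀ hm', mul_comm (m : ℝ)]

lemma volume_latticeCell {m : ℕ} (hm : 0 < m) (x : ℤ × ℤ) :
    volume (latticeCell m x) = ENNReal.ofReal (((m : ℝ) ^ 2)⁻¹) := by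
  have h : ∀ z : ℝ, z / m - (z - 1) / m = (m : ℝ)⁻¹ := fun z => by field_simp; ring
  rw [latticeCell, Measure.volume_eq_prod, Measure.prod_prod, Real.volume_Ioc, Real.volume_Ioc,
    h, h, ← ENNReal.ofReal_mul (by positivity), ← mul_inv, sq]

lemma Ioc_sub_one_div_subset {k : ℕ} {z : ℤ} (hz : z ∈ Finset.Ioc (-(k : ℤ)) k) :
    Set.Ioc (((z : ℝ) - 1) / (2 * k : ℕ)) ((z : ℝ) / (2 * k : ℕ)) ⊆ Set.Ioc (-(1 / 2)) (1 / 2) := by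
  rw [Finset.mem_Ioc] at hz
  have hk : (0 : ℝ) < (2 * k : ℕ) := by norm_cast; omega
  have h1 : -(k : ℝ) + 1 ≤ z := by exact_mod_cast hz.1
  have h2 : (z : ℝ) ≤ k := by exact_mod_cast hz.2
  refine Set.Ioc_subset_Ioc ?_ ?_ <;> push_cast at hk ⊢
  · rw [le_div_iff₀ hk]; linarith
  · rw [div_le_iff₀ hk]; linarith

lemma latticeCell_subset_halfOpenSquare {k : ℕ} {x : ℤ × ℤ} (hx : x ∈ halfOpenBox k) :
    latticeCell (2 * k) x ⊆ halfOpenSquare := by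
  rw [halfOpenBox, Finset.mem_product] at hx
  exact Set.prod_mono (Ioc_sub_one_div_subset hx.1) (Ioc_sub_one_div_subset hx.2)

lemma ceil_two_mul_mem_Ioc {k : ℕ} (hk : 0 < k) {t : ℝ} (ht : t ∈ Set.Ioc (-(1 / 2)) (1 / 2)) :
    ⌈((2 * k : ℕ) : ℝ) * t⌉ ∈ Finset.Ioc (-(k : ℤ)) k := by
  have hk' : (0 : ℝ) < k := Nat.cast_pos.2 hk
  rw [Finset.mem_Ioc, Int.lt_ceil, Int.ceil_le]
  push_cast
  constructor <;> nlinarith [ht.1, ht.2]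

lemma latticeRound_mem_halfOpenBox {k : ℕ} (hk : 0 < k) {y : ℝ × ℝ} (hy : y ∈ halfOpenSquare) :
    latticeRound (2 * k) y ∈ halfOpenBox k :=
  Finset.mem_product.2 ⟨ceil_two_mul_mem_Ioc hk hy.1, ceil_two_mul_mem_Ioc hk hy.2⟩

lemma tendsto_ceil_mul_div (t : ℝ) :
    Tendsto (fun m : ℕ => (⌈m * t⌉ : ℝ) / m) atTop (𝓝 t) := by
  rw [← tendsto_sub_nhds_zero_iff]
  refine squeeze_zero_norm' ?_ tendsto_one_div_atTop_nhds_zero_nat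
  filter_upwards [eventually_gt_atTop 0] with m hm
  have hm' : (0 : ℝ) < m := Nat.cast_pos.2 hm
  rw [Real.norm_eq_abs, div_sub' hm'.ne', abs_div, abs_of_pos hm',
    abs_of_nonneg (by linarith [Int.le_ceil ((m : ℝ) * t)])]
  gcongr
  linarith [Int.ceil_lt_add_one ((m : ℝ) * t)]

lemma tendsto_rescale_latticeRound (y : ℝ × ℝ) :
    Tendsto (fun m : ℕ => rescale m (latticeRound m y)) atTop (𝓝 y) :=
  (tendsto_ceil_mul_div y.1).prodMk_nhds (tendsto_ceil_mul_div y.2)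

def latticeStep (g : ℝ × ℝ → ℝ) (k : ℕ) (y : ℝ × ℝ) : ℝ :=
  ∑ x ∈ halfOpenBox k, (latticeCell (2 * k) x).indicator (fun _ => g (rescale (2 * k) x)) y

lemma measurableSet_latticeCell (m : ℕ) (x : ℤ × ℤ) : MeasurableSet (latticeCell m x) :=
  measurableSet_Ioc.prod measurableSet_Ioc

lemma measurable_latticeStep (g : ℝ × ℝ → ℝ) (k : ℕ) : Measurable (latticeStep g k) :=
  Finset.measurable_sum _ fun _ _ => measurable_const.indicator (measurableSet_latticeCell _ _)

lemma integral_latticeStep (g : ℝ × ℝ → ℝ) {k : ℕ} (hk : 0 < k) :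
    ∫ y in halfOpenSquare, latticeStep g k y
      = (((2 * k : ℕ) : ℝ) ^ 2)⁻¹ * ∑ x ∈ halfOpenBox k, g (rescale (2 * k) x) := by
  have hm : 0 < 2 * k := by omega
  have hint : ∀ x, Integrable
      ((latticeCell (2 * k) x).indicator (fun _ => g (rescale (2 * k) x))) := fun x =>
    (integrableOn_const (by rw [volume_latticeCell hm]; exact ENNReal.ofReal_ne_top)
      ).integrable_indicator (measurableSet_latticeCell _ _)
  simp only [latticeStep]
  rw [integral_finsetSum _ fun x _ => (hint x).restrict, Finset.mul_sum]
  refine Finset.sum_congr rfl fun x hx => ?_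
  rw [setIntegral_indicator (measurableSet_latticeCell _ _),
    Set.inter_eq_self_of_subset_right (latticeCell_subset_halfOpenSquare hx), setIntegral_const,
    measureReal_def, volume_latticeCell hm, ENNReal.toReal_ofReal (by positivity), smul_eq_mul]

lemma latticeStep_eq {g : ℝ × ℝ → ℝ} {k : ℕ} (hk : 0 < k) {y : ℝ × ℝ} (hy : y ∈ halfOpenSquare) :
    latticeStep g k y = g (rescale (2 * k) (latticeRound (2 * k) y)) := by
  have hm : 0 < 2 * k := by omega
  rw [latticeStep, Finset.sum_eq_single_of_mem _ (latticeRound_mem_halfOpenBox hk hy)]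
  · exact Set.indicator_of_mem ((mem_latticeCell_iff hm).2 rfl) _
  · intro x _ hne
    exact Set.indicator_of_notMem (fun h => hne ((mem_latticeCell_iff hm).1 h).symm) _

lemma rescale_latticeRound_mem_Bset {k : ℕ} (hk : 0 < k) {y : ℝ × ℝ} (hy : y ∈ halfOpenSquare) :
    rescale (2 * k) (latticeRound (2 * k) y) ∈ Bset (1 / 2) :=
  rescale_mem_Bset (halfOpenBox_subset_Lam k (latticeRound_mem_halfOpenBox hk hy))

lemma tendsto_integral_latticeStep {g : ℝ × ℝ → ℝ} (hg : ContinuousOn g (Bset (1 / 2))) :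
    Tendsto (fun k => ∫ y in halfOpenSquare, latticeStep g k y) atTop
      (𝓝 (∫ y in Bset (1 / 2), g y)) := by
  obtain ⟨C, hC⟩ := (isCompact_Bset _).exists_bound_of_continuousOn hg
  have hU : MeasurableSet halfOpenSquare := measurableSet_Ioc.prod measurableSet_Ioc
  have hfin : IsFiniteMeasure (volume.restrict halfOpenSquare) :=
    isFiniteMeasure_restrict.2 ((measure_mono halfOpenSquare_subset_Bset).trans_lt
      (isCompact_Bset _).measure_lt_top).ne
  rw [setIntegral_congr_set halfOpenSquare_ae_eq_Bset.symm]
  refine tendsto_integral_filter_of_dominated_convergence (fun _ => C)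
    (.of_forall fun k => (measurable_latticeStep g k).aestronglyMeasurable) ?_
    (integrable_const C) ?_
  · filter_upwards [eventually_gt_atTop 0] with k hk
    rw [ae_restrict_iff' hU]
    refine .of_forall fun y hy => ?_
    rw [latticeStep_eq hk hy]
    exact hC _ (rescale_latticeRound_mem_Bset hk hy)
  · rw [ae_restrict_iff' hU]
    refine .of_forall fun y hy => ?_
    have hround : Tendsto (fun k => rescale (2 * k) (latticeRound (2 * k) y)) atTop
        (𝓝[Bset (1 / 2)] y) :=
      tendsto_nhdsWithin_iff.2
        ⟨(tendsto_rescale_latticeRound y).comp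
            (tendsto_atTop_mono (fun k => Nat.le_mul_of_pos_left k two_pos) tendsto_id),
          (eventually_gt_atTop 0).mono fun k hk => rescale_latticeRound_mem_Bset hk hy⟩
    refine ((hg y (halfOpenSquare_subset_Bset hy)).tendsto.comp hround).congr' ?_
    filter_upwards [eventually_gt_atTop 0] with k hk
    exact (latticeStep_eq hk hy).symm

lemma tendsto_latticeSum_boundary {g : ℝ × ℝ → ℝ} (hg : ContinuousOn g (Bset (1 / 2))) :
    Tendsto (fun k : ℕ => (((2 * k : ℕ) : ℝ) ^ 2)⁻¹ *
      ∑ x ∈ Lam (2 * k : ℕ) \ halfOpenBox k, g (rescale (2 * k) x)) atTop (𝓝 0) := by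
  obtain ⟨C, hC⟩ := (isCompact_Bset _).exists_bound_of_continuousOn hg
  have hlim : Tendsto (fun k : ℕ => 2 * C * (k : ℝ)⁻¹) atTop (𝓝 0) := by
    simpa using (tendsto_inv_atTop_nhds_zero_nat (𝕜 := ℝ)).const_mul (2 * C)
  refine squeeze_zero_norm' ?_ hlim
  filter_upwards [eventually_gt_atTop 0] with k hk
  have hk' : (1 : ℝ) ≤ k := by exact_mod_cast hk
  have hsum : ‖∑ x ∈ Lam (2 * k : ℕ) \ halfOpenBox k, g (rescale (2 * k) x)‖ ≤ (4 * k + 1) * C :=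
    calc _ ≤ ∑ x ∈ Lam (2 * k : ℕ) \ halfOpenBox k, ‖g (rescale (2 * k) x)‖ := norm_sum_le _ _
      _ ≤ #(Lam (2 * k : ℕ) \ halfOpenBox k) • C :=
        Finset.sum_le_card_nsmul _ _ _ fun x hx => hC _ (rescale_mem_Bset (Finset.mem_sdiff.1 hx).1)
      _ = (4 * k + 1) * C := by rw [card_Lam_sdiff_halfOpenBox, nsmul_eq_mul]; push_cast; ring
  have hC0 : 0 ≤ C := (norm_nonneg _).trans (hC 0 (by simp [Bset, supNorm]))
  rw [norm_mul, norm_inv, norm_pow, Real.norm_natCast, inv_mul_le_iff₀ (by positivity)]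
  calc _ ≤ (4 * k + 1) * C := hsum
    _ ≤ ((2 * k : ℕ) : ℝ) ^ 2 * (2 * C * (k : ℝ)⁻¹) := by
      push_cast
      rw [show (2 * (k : ℝ)) ^ 2 * (2 * C * (k : ℝ)⁻¹) = 8 * k * C by field_simp; ring]
      nlinarith

lemma tendsto_latticeSum {g : ℝ × ℝ → ℝ} (hg : ContinuousOn g (Bset (1 / 2))) :
    Tendsto (fun k => latticeSum g (2 * k)) atTop (𝓝 (∫ y in Bset (1 / 2), g y)) := by
  have hbox := (tendsto_integral_latticeStep hg).congr'
    ((eventually_gt_atTop 0).mono fun k hk => integral_latticeStep g hk)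
  have hsum := (tendsto_latticeSum_boundary hg).add hbox
  rw [zero_add] at hsum
  refine hsum.congr fun k => ?_
  rw [← mul_add, Finset.sum_sdiff (halfOpenBox_subset_Lam k), latticeSum]

lemma sum_fst_mul_snd_mul_eq_zero {S : Finset (ℤ × ℤ)} {q : ℤ × ℤ → ℝ}
    (hS : ∀ x ∈ S, (-x.1, x.2) ∈ S) (hq : ∀ x ∈ S, q (-x.1, x.2) = q x) :
    ∑ x ∈ S, (x.1 : ℝ) * x.2 * q x = 0 := by
  have h : ∑ x ∈ S, (x.1 : ℝ) * x.2 * q x = ∑ x ∈ S, -((x.1 : ℝ) * x.2 * q x) :=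
    Finset.sum_nbij' (fun x => (-x.1, x.2)) (fun x => (-x.1, x.2)) hS hS
      (fun x _ => by simp) (fun x _ => by simp) fun x hx => by rw [hq x hx]; push_cast; ring
  rw [Finset.sum_neg_distrib] at h
  linarith

lemma sum_snd_sq_mul_eq {S : Finset (ℤ × ℤ)} {q : ℤ × ℤ → ℝ}
    (hS : ∀ x ∈ S, x.swap ∈ S) (hq : ∀ x ∈ S, q x.swap = q x) :
    ∑ x ∈ S, (x.2 : ℝ) ^ 2 * q x = ∑ x ∈ S, (x.1 : ℝ) ^ 2 * q x :=
  Finset.sum_nbij' Prod.swap Prod.swap hS hS (fun x _ => x.swap_swap) (fun x _ => x.swap_swap)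
    fun x hx => by rw [hq x hx, Prod.fst_swap]

lemma sum_mul_dotP_sq_eq {S : Finset (ℤ × ℤ)} {q : ℤ × ℤ → ℝ}
    (hS_swap : ∀ x ∈ S, x.swap ∈ S) (hS_neg : ∀ x ∈ S, (-x.1, x.2) ∈ S)
    (hq_swap : ∀ x ∈ S, q x.swap = q x) (hq_neg : ∀ x ∈ S, q (-x.1, x.2) = q x) (θ : ℝ × ℝ) :
    ∑ x ∈ S, q x * dotP θ x ^ 2 = (∑ x ∈ S, (x.1 : ℝ) ^ 2 * q x) * sqNormR θ := by
  have hexpand : ∀ x : ℤ × ℤ, q x * dotP θ x ^ 2 = θ.1 ^ 2 * ((x.1 : ℝ) ^ 2 * q x)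
      + 2 * θ.1 * θ.2 * ((x.1 : ℝ) * x.2 * q x) + θ.2 ^ 2 * ((x.2 : ℝ) ^ 2 * q x) := fun x => by
    rw [dotP]; ring
  simp only [hexpand, Finset.sum_add_distrib, ← Finset.mul_sum]
  rw [sum_fst_mul_snd_mul_eq_zero hS_neg hq_neg, sum_snd_sq_mul_eq hS_swap hq_swap, sqNormR]
  ring

lemma abs_one_sub_cos_sub_sq_div_two_le {t : ℝ} (ht : |t| ≤ 1) :
    |1 - cos t - t ^ 2 / 2| ≤ 5 / 96 * t ^ 4 := by
  rw [← abs_neg, show -(1 - cos t - t ^ 2 / 2) = cos t - (1 - t ^ 2 / 2) by ring]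
  calc _ ≤ |t| ^ 4 * (5 / 96) := Real.cos_bound ht
    _ = 5 / 96 * t ^ 4 := by rw [pow_abs, abs_of_nonneg (by positivity : (0 : ℝ) ≤ t ^ 4), mul_comm]

lemma abs_sum_mul_one_sub_cos_sub_le {ι : Type*} {S : Finset ι} {q t : ι → ℝ} {δ : ℝ}
    (hq : ∀ i ∈ S, 0 ≤ q i) (ht : ∀ i ∈ S, |t i| ≤ δ) (hδ : δ ≤ 1) :
    |∑ i ∈ S, q i * (1 - cos (t i)) - (∑ i ∈ S, q i * t i ^ 2) / 2|
      ≤ 5 / 96 * δ ^ 2 * ∑ i ∈ S, q i * t i ^ 2 := by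
  rw [Finset.sum_div, ← Finset.sum_sub_distrib, Finset.mul_sum]
  refine (Finset.abs_sum_le_sum_abs _ _).trans (Finset.sum_le_sum fun i hi => ?_)
  have hti : t i ^ 2 ≤ δ ^ 2 := sq_le_sq' (abs_le.1 (ht i hi)).1 (abs_le.1 (ht i hi)).2
  calc |q i * (1 - cos (t i)) - q i * t i ^ 2 / 2|
      = q i * |1 - cos (t i) - t i ^ 2 / 2| := by
        rw [mul_div_assoc, ← mul_sub, abs_mul, abs_of_nonneg (hq i hi)]
    _ ≤ q i * (5 / 96 * t i ^ 4) :=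
        mul_le_mul_of_nonneg_left (abs_one_sub_cos_sub_sq_div_two_le ((ht i hi).trans hδ)) (hq i hi)
    _ ≤ 5 / 96 * δ ^ 2 * (q i * t i ^ 2) := by
        have := mul_le_mul_of_nonneg_left hti (mul_nonneg (hq i hi) (sq_nonneg (t i)))
        nlinarith

lemma phiOf_eq_sum_cos (m : ℕ) (q : ℤ × ℤ → ℝ) (θ : ℝ × ℝ) :
    phiOf m q θ = ∑ x ∈ Lam m, q x * cos (dotP θ x) := by
  rw [phiOf, Complex.re_sum]
  refine Finset.sum_congr rfl fun x _ => ?_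
  rw [cexp, mul_comm Complex.I, Complex.re_mul_ofReal, Complex.exp_ofReal_mul_I_re, mul_comm]

lemma abs_dotP_le {m : ℕ} {x : ℤ × ℤ} (hx : x ∈ Lam m) {θ : ℝ × ℝ} {δ : ℝ} (hδ : 0 ≤ δ)
    (hθ : supNorm θ ≤ δ / m) : |dotP θ x| ≤ δ := by
  obtain ⟨hx1, hx2⟩ := abs_le_of_mem_Lam hx
  have hscale : δ / m * (m / 2) ≤ δ / 2 := by
    rcases Nat.eq_zero_or_pos m with rfl | hm
    · simp only [CharP.cast_eq_zero, div_zero, zero_mul]; positivity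
    · rw [div_mul_div_comm, mul_comm δ, mul_div_mul_left _ _ (by positivity)]
  calc |dotP θ x| ≤ |θ.1| * |(x.1 : ℝ)| + |θ.2| * |(x.2 : ℝ)| := by
        rw [dotP, ← abs_mul, ← abs_mul]; exact abs_add_le _ _
    _ ≤ δ / m * (m / 2) + δ / m * (m / 2) := by
        gcongr
        exacts [(le_max_left _ _).trans hθ, (le_max_right _ _).trans hθ]
    _ ≤ δ := by linarith

lemma sqNormR_pos {θ : ℝ × ℝ} (hθ : θ ≠ 0) : 0 < sqNormR θ := by
  rw [sqNormR]
  contrapose! hθ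
  have h1 : θ.1 ^ 2 = 0 := by nlinarith [sq_nonneg θ.1, sq_nonneg θ.2]
  have h2 : θ.2 ^ 2 = 0 := by nlinarith [sq_nonneg θ.1, sq_nonneg θ.2]
  exact Prod.ext (pow_eq_zero_iff two_ne_zero |>.1 h1) (pow_eq_zero_iff two_ne_zero |>.1 h2)

lemma abs_one_sub_phiOf_sub_le {m : ℕ} {q : ℤ × ℤ → ℝ} (hq0 : ∀ x, 0 ≤ q x)
    (hq1 : ∑ x ∈ Lam m, q x = 1) {θ : ℝ × ℝ} {δ : ℝ} (hδ0 : 0 ≤ δ) (hδ1 : δ ≤ 1)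
    (hθ : supNorm θ ≤ δ / m) :
    |1 - phiOf m q θ - (∑ x ∈ Lam m, q x * dotP θ x ^ 2) / 2|
      ≤ 5 / 96 * δ ^ 2 * ∑ x ∈ Lam m, q x * dotP θ x ^ 2 := by
  have h1 : 1 - phiOf m q θ = ∑ x ∈ Lam m, q x * (1 - cos (dotP θ x)) := by
    simp only [phiOf_eq_sum_cos, mul_one_sub, Finset.sum_sub_distrib, hq1]
  rw [h1]
  exact abs_sum_mul_one_sub_cos_sub_le (fun x _ => hq0 x) (fun x hx => abs_dotP_le hx hδ0 hθ) hδ1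

def secondMoment (m : ℕ) (q : ℤ × ℤ → ℝ) : ℝ := ∑ x ∈ Lam m, (x.1 : ℝ) ^ 2 * q x

section qMf

variable {f : ℝ × ℝ → ℝ} {c : ℕ → ℝ} {m : ℕ}

lemma qMf_eq_of_sum_eq_one (hsum : ∑ x ∈ (Lam m).erase 0, qMf f c m x = 1) (x : ℤ × ℤ) :
    qMf f c m x = if x ∈ (Lam m).erase 0 then
      f (rescale m x) / ∑ y ∈ (Lam m).erase 0, f (rescale m y) else 0 := by
  have hc : c m * (#((Lam m).erase 0) : ℝ)⁻¹ = (∑ y ∈ (Lam m).erase 0, f (rescale m y))⁻¹ := by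
    refine eq_inv_of_mul_eq_one_left ?_
    rw [← hsum, Finset.mul_sum]
    refine Finset.sum_congr rfl fun y hy => ?_
    rw [qMf, uunif, if_pos hy, rescale]
    ring
  rw [qMf, uunif]
  split_ifs
  · rw [div_eq_mul_inv (f (rescale m x)), ← hc, rescale]
    ring
  · rw [mul_zero]

lemma qMf_nonneg (hfpos : ∀ x ∈ Bset (1 / 2), 0 < f x)
    (hsum : ∑ x ∈ (Lam m).erase 0, qMf f c m x = 1) (x : ℤ × ℤ) : 0 ≤ qMf f c m x := by
  have hf : ∀ y ∈ (Lam m).erase 0, 0 ≤ f (rescale m y) := fun y hy =>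
    (hfpos _ (rescale_mem_Bset (Finset.mem_of_mem_erase hy))).le
  rw [qMf_eq_of_sum_eq_one hsum]
  split_ifs with hx
  · exact div_nonneg (hf x hx) (Finset.sum_nonneg hf)
  · rfl

lemma sum_Lam_qMf (hsum : ∑ x ∈ (Lam m).erase 0, qMf f c m x = 1) :
    ∑ x ∈ Lam m, qMf f c m x = 1 :=
  (Finset.sum_erase _ (by simp [qMf, uunif])).symm.trans hsum

lemma uunif_swap {x : ℤ × ℤ} (hx : x ∈ Lam m) : uunif m x.swap = uunif m x := by
  have h0 : x.swap = 0 ↔ x = 0 := by simp [Prod.ext_iff, and_comm]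
  simp only [uunif, Finset.mem_erase, ne_eq, hx, swap_mem_Lam hx, h0]

lemma uunif_neg_fst {x : ℤ × ℤ} (hx : x ∈ Lam m) : uunif m (-x.1, x.2) = uunif m x := by
  have h0 : ((-x.1, x.2) : ℤ × ℤ) = 0 ↔ x = 0 := by simp [Prod.ext_iff]
  simp only [uunif, Finset.mem_erase, ne_eq, hx, neg_fst_mem_Lam hx, h0]

lemma qMf_swap (hfsym1 : ∀ x ∈ Bset (1 / 2), f (x.1, x.2) = f (x.2, x.1)) {x : ℤ × ℤ}
    (hx : x ∈ Lam m) : qMf f c m x.swap = qMf f c m x := by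
  rw [qMf, qMf, uunif_swap hx]
  congr 2
  exact (hfsym1 _ (rescale_mem_Bset hx)).symm

lemma qMf_neg_fst (hfsym2 : ∀ x ∈ Bset (1 / 2), f (x.1, x.2) = f (-x.1, x.2)) {x : ℤ × ℤ}
    (hx : x ∈ Lam m) : qMf f c m (-x.1, x.2) = qMf f c m x := by
  rw [qMf, qMf, uunif_neg_fst hx, Int.cast_neg, neg_div]
  congr 2
  exact (hfsym2 _ (rescale_mem_Bset hx)).symm

lemma abs_one_sub_phiOf_qMf_sub_le (hfpos : ∀ x ∈ Bset (1 / 2), 0 < f x)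
    (hfsym1 : ∀ x ∈ Bset (1 / 2), f (x.1, x.2) = f (x.2, x.1))
    (hfsym2 : ∀ x ∈ Bset (1 / 2), f (x.1, x.2) = f (-x.1, x.2))
    (hsum : ∑ x ∈ (Lam m).erase 0, qMf f c m x = 1) {θ : ℝ × ℝ} {δ : ℝ} (hδ0 : 0 ≤ δ)
    (hδ1 : δ ≤ 1) (hθ : supNorm θ ≤ δ / m) :
    |1 - phiOf m (qMf f c m) θ - secondMoment m (qMf f c m) * sqNormR θ / 2|
      ≤ 5 / 96 * δ ^ 2 * (secondMoment m (qMf f c m) * sqNormR θ) := by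
  rw [secondMoment, ← sum_mul_dotP_sq_eq (fun _ => swap_mem_Lam) (fun _ => neg_fst_mem_Lam)
    (fun _ => qMf_swap hfsym1) (fun _ => qMf_neg_fst hfsym2)]
  exact abs_one_sub_phiOf_sub_le (qMf_nonneg hfpos hsum) (sum_Lam_qMf hsum) hδ0 hδ1 hθ

lemma secondMoment_qMf_div_sq (hsum : ∑ x ∈ (Lam m).erase 0, qMf f c m x = 1) (hm : 0 < m) :
    secondMoment m (qMf f c m) / (m : ℝ) ^ 2
      = latticeSum (fun y => y.1 ^ 2 * f y) m / (latticeSum f m - ((m : ℝ) ^ 2)⁻¹ * f 0) := by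
  set Z := ∑ y ∈ (Lam m).erase 0, f (rescale m y)
  have hZ : latticeSum f m - ((m : ℝ) ^ 2)⁻¹ * f 0 = ((m : ℝ) ^ 2)⁻¹ * Z := by
    have h0 : rescale m 0 = 0 := by simp [rescale]
    rw [latticeSum, ← Finset.add_sum_erase _ _ (zero_mem_Lam m), h0]
    ring
  have hA : secondMoment m (qMf f c m) = (∑ x ∈ Lam m, (x.1 : ℝ) ^ 2 * f (rescale m x)) / Z := by
    rw [secondMoment, Finset.sum_div]
    refine Finset.sum_congr rfl fun x hx => ?_
    rw [qMf_eq_of_sum_eq_one hsum]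
    split_ifs with h
    · ring
    · obtain rfl : x = 0 := by simpa [hx] using h
      simp
  have hm' : (m : ℝ) ≠ 0 := Nat.cast_ne_zero.2 hm.ne'
  rw [hZ, hA, latticeSum]
  simp only [rescale, div_pow, div_mul_eq_mul_div, ← Finset.sum_div]
  field_simp

end qMf

lemma setIntegral_Bset_pos {g : ℝ × ℝ → ℝ} (hg : ContinuousOn g (Bset (1 / 2)))
    (hg0 : ∀ x ∈ Bset (1 / 2), 0 ≤ g x) (hgpos : ∀ x ∈ Bset (1 / 2), 0 < x.1 → 0 < g x) :
    0 < ∫ x in Bset (1 / 2), g x := by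
  have hB : MeasurableSet (Bset (1 / 2)) := by
    rw [Bset_eq_Icc_prod]; exact measurableSet_Icc.prod measurableSet_Icc
  rw [setIntegral_pos_iff_support_of_nonneg_ae ((ae_restrict_iff' hB).2 (.of_forall hg0))
    (hg.integrableOn_compact (isCompact_Bset _))]
  have hsub :
      Set.Ioc 0 (1 / 2) ×ˢ Set.Icc (-(1 / 2)) (1 / 2) ⊆ Function.support g ∩ Bset (1 / 2) := by
    rintro x ⟨h1, h2⟩
    have hx : x ∈ Bset (1 / 2) := by
      rw [Bset_eq_Icc_prod]; exact ⟨⟨by linarith [h1.1], h1.2⟩, h2⟩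
    exact ⟨(hgpos x hx h1.1).ne', hx⟩
  refine lt_of_lt_of_le ?_ (measure_mono hsub)
  rw [Measure.volume_eq_prod, Measure.prod_prod, Real.volume_Ioc, Real.volume_Icc]
  norm_num

lemma integral_Bset_pos {f : ℝ × ℝ → ℝ} (hfcont : ContinuousOn f (Bset (1 / 2)))
    (hfpos : ∀ x ∈ Bset (1 / 2), 0 < f x) : 0 < ∫ x in Bset (1 / 2), f x :=
  setIntegral_Bset_pos hfcont (fun x hx => (hfpos x hx).le) fun x hx _ => hfpos x hx

lemma integral_fst_sq_mul_pos {f : ℝ × ℝ → ℝ} (hfcont : ContinuousOn f (Bset (1 / 2)))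
    (hfpos : ∀ x ∈ Bset (1 / 2), 0 < f x) : 0 < ∫ x in Bset (1 / 2), x.1 ^ 2 * f x :=
  setIntegral_Bset_pos (((continuous_fst.pow 2).continuousOn).mul hfcont)
    (fun x hx => mul_nonneg (sq_nonneg _) (hfpos x hx).le) fun x hx h1 => by
      have := hfpos x hx; positivity

lemma variance_pos {f : ℝ × ℝ → ℝ} (hfcont : ContinuousOn f (Bset (1 / 2)))
    (hfpos : ∀ x ∈ Bset (1 / 2), 0 < f x) :
    0 < (∫ x in Bset (1 / 2), f x)⁻¹ * ∫ x in Bset (1 / 2), x.1 ^ 2 * f x :=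
  mul_pos (inv_pos.2 (integral_Bset_pos hfcont hfpos)) (integral_fst_sq_mul_pos hfcont hfpos)

lemma tendsto_secondMoment_qMf_div_sq {f : ℝ × ℝ → ℝ} {c : ℕ → ℝ}
    (hfcont : ContinuousOn f (Bset (1 / 2))) (hI : ∫ x in Bset (1 / 2), f x ≠ 0)
    (hcsum : ∀ m : ℕ, Even m → 0 < m → ∑ x ∈ (Lam m).erase 0, qMf f c m x = 1) :
    Tendsto (fun k => secondMoment (2 * k) (qMf f c (2 * k)) / ((2 * k : ℕ) : ℝ) ^ 2) atTop
      (𝓝 ((∫ x in Bset (1 / 2), f x)⁻¹ * ∫ x in Bset (1 / 2), x.1 ^ 2 * f x)) := by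
  have hnum := tendsto_latticeSum (((continuous_fst.pow 2).continuousOn).mul hfcont)
  have hinv : Tendsto (fun k : ℕ => (((2 * k : ℕ) : ℝ) ^ 2)⁻¹) atTop (𝓝 0) :=
    tendsto_inv_atTop_zero.comp <| (tendsto_pow_atTop two_ne_zero).comp <|
      tendsto_natCast_atTop_atTop.comp <|
        tendsto_atTop_mono (fun k => Nat.le_mul_of_pos_left k two_pos) tendsto_id
  have hden := (tendsto_latticeSum hfcont).sub (hinv.mul_const (f 0))
  rw [zero_mul, sub_zero] at hden
  rw [inv_mul_eq_div]
  refine (hnum.div hden hI).congr' ?_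
  filter_upwards [eventually_gt_atTop 0] with k hk
  exact (secondMoment_qMf_div_sq (hcsum _ (even_two_mul k) (by omega)) (by omega)).symm

lemma tendsto_secondMoment_qMf_div_variance {f : ℝ × ℝ → ℝ} {c : ℕ → ℝ}
    (hfpos : ∀ x ∈ Bset (1 / 2), 0 < f x) (hfcont : ContinuousOn f (Bset (1 / 2)))
    (hcsum : ∀ m : ℕ, Even m → 0 < m → ∑ x ∈ (Lam m).erase 0, qMf f c m x = 1) :
    Tendsto (fun k => secondMoment (2 * k) (qMf f c (2 * k)) /
      ((∫ x in Bset (1 / 2), f x)⁻¹ * (∫ x in Bset (1 / 2), x.1 ^ 2 * f x)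
        * ((2 * k : ℕ) : ℝ) ^ 2)) atTop (𝓝 1) := by
  have hlim := tendsto_secondMoment_qMf_div_sq hfcont (integral_Bset_pos hfcont hfpos).ne' hcsum
  set σ2 := (∫ x in Bset (1 / 2), f x)⁻¹ * ∫ x in Bset (1 / 2), x.1 ^ 2 * f x
  have hσ2 : σ2 ≠ 0 := (variance_pos hfcont hfpos).ne'
  simpa only [div_div, mul_comm σ2, div_self hσ2] using hlim.div_const σ2

lemma div_mem_Ioo_of_abs_sub_le {N D w η ε : ℝ} (hD : 0 < D) (hN : |N - w * D| ≤ η * (w * D))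
    (hη : η ≤ ε / 4) (hw : |w - 1| < min (ε / 2) 1) : N / D ∈ Set.Ioo (1 - ε) (1 + ε) := by
  obtain ⟨hwε, hw1⟩ := lt_min_iff.1 hw
  obtain ⟨hw1l, hw1r⟩ := abs_lt.1 hw1
  have hwD : 0 < w * D := mul_pos (by linarith) hD
  have hη0 : 0 ≤ η := (mul_nonneg_iff_of_pos_right hwD).1 ((abs_nonneg _).trans hN)
  have hND : |N / D - w| ≤ η * w := by
    rw [show N / D - w = (N - w * D) / D by field_simp, abs_div, abs_of_pos hD, div_le_iff₀ hD,
      mul_assoc]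
    exact hN
  have hlt : |N / D - 1| < ε :=
    calc |N / D - 1| ≤ |N / D - w| + |w - 1| := abs_sub_le _ _ _
      _ < η * w + ε / 2 := by linarith
      _ ≤ ε := by nlinarith
  rw [Set.mem_Ioo]
  constructor <;> linarith [abs_lt.1 hlt]

theorem prop_suff_P1_general (f : ℝ × ℝ → ℝ) (c : ℕ → ℝ)
    (hfpos : ∀ x ∈ Bset (1 / 2), 0 < f x)
    (hfcont : ContinuousOn f (Bset (1 / 2)))
    (hfsym1 : ∀ x ∈ Bset (1 / 2), f (x.1, x.2) = f (x.2, x.1))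
    (hfsym2 : ∀ x ∈ Bset (1 / 2), f (x.1, x.2) = f (-x.1, x.2))
    (hcsum : ∀ m : ℕ, Even m → 0 < m → ∑ x ∈ (Lam m).erase 0, qMf f c m x = 1) :
    ∀ ε > (0 : ℝ), ∃ δ > (0 : ℝ), ∃ M₀ : ℕ, ∀ m : ℕ, Even m → M₀ ≤ m →
      ∀ θ : ℝ × ℝ, θ ≠ 0 → supNorm θ ≤ δ / m →
      (1 - phiOf m (qMf f c m) θ) /
          ((∫ x in Bset (1 / 2), f x)⁻¹ * (∫ x in Bset (1 / 2), x.1 ^ 2 * f x)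
            * (m : ℝ) ^ 2 * sqNormR θ / 2)
        ∈ Set.Ioo (1 - ε) (1 + ε) := by
  intro ε hε
  have hσ2 := variance_pos hfcont hfpos
  obtain ⟨K, hK⟩ := Metric.tendsto_atTop.1
    (tendsto_secondMoment_qMf_div_variance hfpos hfcont hcsum) (min (ε / 2) 1) (by positivity)
  set σ2 := (∫ x in Bset (1 / 2), f x)⁻¹ * ∫ x in Bset (1 / 2), x.1 ^ 2 * f x
  set δ := min 1 √ε
  have hδ : δ ^ 2 ≤ ε :=
    (pow_le_pow_left₀ (by positivity) (min_le_right _ _) 2).trans (Real.sq_sqrt hε.le).le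
  refine ⟨δ, by positivity, 2 * K + 1, fun m hm hmK θ hθ0 hθ => ?_⟩
  obtain ⟨k, rfl⟩ := even_iff_two_dvd.1 hm
  have hM : (0 : ℝ) < (2 * k : ℕ) := by norm_cast; omega
  have hS := sqNormR_pos hθ0
  have hwD : secondMoment (2 * k) (qMf f c (2 * k)) / (σ2 * ((2 * k : ℕ) : ℝ) ^ 2)
      * (σ2 * ((2 * k : ℕ) : ℝ) ^ 2 * sqNormR θ / 2)
      = secondMoment (2 * k) (qMf f c (2 * k)) * sqNormR θ / 2 := by
    field_simp
  refine div_mem_Ioo_of_abs_sub_le (η := 5 / 48 * δ ^ 2) (by positivity) ?_ (by linarith)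
    (by rw [← Real.dist_eq]; exact hK k (by omega))
  rw [hwD]
  have := abs_one_sub_phiOf_qMf_sub_le hfpos hfsym1 hfsym2 (hcsum _ hm (by omega)) (by positivity)
    (min_le_left _ _) hθ
  linarith

/-- Property (P1) for the distributions `q_M(x) = c_M f(x/M) u_M(x)`:
for every `ε > 0` there are `δ > 0` and `M₀` such that for all even `M ≥ M₀` and
all `θ ∈ B(δ/M)`, `θ ≠ 0`, the ratio `(1 − φ_M(θ))/(σ²M²|θ|²/2)` lies in `(1−ε, 1+ε)`,
where `σ² = c₀ ∫_{B(1/2)} x₁² f(x) dx` and `c₀ = 1/∫_{B(1/2)} f(x) dx`. -/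
theorem prop_suff_P1 (f : ℝ × ℝ → ℝ) (c : ℕ → ℝ)
    (hfpos : ∀ x ∈ Bset (1 / 2), 0 < f x)
    (hfcont : ContinuousOn f (Bset (1 / 2)))
    (hfsym1 : ∀ x ∈ Bset (1 / 2), f (x.1, x.2) = f (x.2, x.1))
    (hfsym2 : ∀ x ∈ Bset (1 / 2), f (x.1, x.2) = f (-x.1, x.2))
    (hcpos : ∀ m : ℕ, Even m → 0 < m → 0 < c m)
    (hcsum : ∀ m : ℕ, Even m → 0 < m → ∑ x ∈ (Lam m).erase 0, qMf f c m x = 1) :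
    ∀ ε > (0 : ℝ), ∃ δ > (0 : ℝ), ∃ M₀ : ℕ, ∀ m : ℕ, Even m → M₀ ≤ m →
      ∀ θ : ℝ × ℝ, θ ≠ 0 → supNorm θ ≤ δ / m →
      (1 - phiOf m (qMf f c m) θ) /
          ((∫ x in Bset (1 / 2), f x)⁻¹ * (∫ x in Bset (1 / 2), x.1 ^ 2 * f x)
            * (m : ℝ) ^ 2 * sqNormR θ / 2)
        ∈ Set.Ioo (1 - ε) (1 + ε) :=
  prop_suff_P1_general f c hfpos hfcont hfsym1 hfsym2 hcsum
end
end

section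
/- Assume conditions (P0)–(P3) hold for the sequence (q_{M_L}, φ_{M_L}) indexed by even positive integers L, and let (s_L) be positive reals with s_L / ((L²/M_L²) ∨ log L) → ∞ as L → ∞. Then lim_{L→∞} sup_{t ≥ s_L} sup_{x ∈ T_L} |∑_{y ∈ T'_L} exp(−t(1 − φ_{M_L}(2π y / L))) e^{2πi x·y / L}| = 0. (For the rate-one continuous-time random walk X^L on the torus T_L with jump distribution q_{M_L}, this quantity equals L²|P₀(X^L_t = x) − L^{−2}| by Fourier inversion, so the walk becomes uniform on T_L by time s_L.) -/
open Filter MeasureTheory Real Finset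
open scoped BigOperators

noncomputable section

/-! Every summand has modulus `exp (-t (1 - φ(2πy/L)))`. On the frequencies with
`‖2πy/L‖_∞ ≤ δ/M_L`, (P1) gives `1 - φ ≥ σ² M_L² |θ|² / 4`, so they contribute at most a
discrete Gaussian sum `∑_{y ≠ 0} exp (-β |y|²) ≤ 16 exp (-β/2)` with `β = π² σ² t M_L² / L² → ∞`.
On all other frequencies (P2) and (P3) give a uniform gap `1 - φ ≥ ζ`, so these at most `L²`
terms contribute `L² exp (-t ζ)`, which tends to `0` because `t / log L → ∞`. -/

open Topology

lemma abs_le_half_of_mem_Tset {k : ℝ} {y : ℤ × ℤ} (hy : y ∈ Tset k) :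
    |(y.1 : ℝ)| ≤ k / 2 ∧ |(y.2 : ℝ)| ≤ k / 2 := by
  have key : ∀ n : ℤ, n ∈ Ioc ⌊-k / 2⌋ ⌊k / 2⌋ → |(n : ℝ)| ≤ k / 2 := by
    intro n hn
    obtain ⟨hlo, hhi⟩ := Finset.mem_Ioc.1 hn
    have hlo' : -k / 2 < n := Int.floor_lt.1 hlo
    have hhi' : (n : ℝ) ≤ k / 2 := Int.le_floor.1 hhi
    exact abs_le.2 ⟨by linarith, hhi'⟩
  obtain ⟨h1, h2⟩ := Finset.mem_product.1 hy
  exact ⟨key _ h1, key _ h2⟩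

lemma card_Tset_natCast (L : ℕ) : (Tset L).card = L ^ 2 := by
  have hfloor : ∀ n : ℤ, ⌊(n : ℝ) / 2⌋ = n / 2 := fun n => by
    rw [← Nat.cast_ofNat, Int.floor_div_natCast, Int.floor_intCast]; rfl
  have hlo : ⌊-(L : ℝ) / 2⌋ = -(L : ℤ) / 2 := by
    rw [← hfloor, Int.cast_neg, Int.cast_natCast]
  have hhi : ⌊(L : ℝ) / 2⌋ = (L : ℤ) / 2 := by rw [← hfloor, Int.cast_natCast]
  rw [Tset, hlo, hhi, card_product, Int.card_Ioc, sq]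
  congr 1 <;> omega

lemma supNorm_fourierTheta_le_pi {L : ℕ} (hL : 0 < L) {y : ℤ × ℤ} (hy : y ∈ Tset L) :
    supNorm (fourierTheta L y) ≤ π := by
  have hL' : (0 : ℝ) < L := Nat.cast_pos.2 hL
  have key : ∀ n : ℤ, |(n : ℝ)| ≤ L / 2 → |2 * π * n / L| ≤ π := by
    intro n hn
    rw [abs_div, abs_mul, abs_of_pos two_pi_pos, abs_of_pos hL', div_le_iff₀ hL']
    nlinarith [pi_pos]
  obtain ⟨h1, h2⟩ := abs_le_half_of_mem_Tset hy
  exact max_le (key _ h1) (key _ h2)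

lemma abs_intCast_le_sq (a : ℤ) : |(a : ℝ)| ≤ (a : ℝ) ^ 2 := by
  have : |a| ≤ a ^ 2 := Int.natCast_natAbs a ▸ Int.natAbs_le_self_sq a
  exact_mod_cast this

lemma one_le_sqNorm {y : ℤ × ℤ} (hy : y ≠ 0) : 1 ≤ sqNorm y := by
  have key : ∀ a : ℤ, a ≠ 0 → 1 ≤ (a : ℝ) ^ 2 := fun a ha => by
    have : (1 : ℝ) ≤ |(a : ℝ)| := by exact_mod_cast Int.one_le_abs ha
    nlinarith [sq_abs (a : ℝ)]
  have : y.1 ≠ 0 ∨ y.2 ≠ 0 := by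
    by_contra! h
    exact hy (Prod.ext h.1 h.2)
  unfold sqNorm
  rcases this with h | h
  · nlinarith [key _ h, sq_nonneg (y.2 : ℝ)]
  · nlinarith [key _ h, sq_nonneg (y.1 : ℝ)]

lemma sqNormR_fourierTheta (L : ℕ) (y : ℤ × ℤ) :
    sqNormR (fourierTheta L y) = (2 * π / L) ^ 2 * sqNorm y := by
  simp only [sqNormR, sqNorm, fourierTheta]
  ring

lemma fourierTheta_ne_zero {L : ℕ} (hL : L ≠ 0) {y : ℤ × ℤ} (hy : y ≠ 0) :
    fourierTheta L y ≠ 0 := by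
  intro h
  have := sqNormR_fourierTheta L y
  rw [h] at this
  simp [sqNormR, hL, pi_ne_zero, (zero_lt_one.trans_le (one_le_sqNorm hy)).ne'] at this

lemma norm_ofReal_exp_mul_eL (r : ℝ) (L : ℕ) (x y : ℤ × ℤ) :
    ‖(exp r : ℂ) * eL L x y‖ = exp r := by
  have : eL L x y = Complex.exp ((2 * π * (x.1 * y.1 + x.2 * y.2 : ℤ) / L : ℝ) * Complex.I) := by
    rw [eL]; push_cast; ring_nf
  rw [norm_mul, this, Complex.norm_exp_ofReal_mul_I, Complex.norm_real,
    Real.norm_of_nonneg (exp_pos r).le, mul_one]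

lemma sum_half_pow_natAbs_le_two {u : Finset ℤ} (hu : Set.InjOn Int.natAbs u) :
    ∑ n ∈ u, (1 / 2 : ℝ) ^ n.natAbs ≤ 2 := by
  rw [← Finset.sum_image hu]
  exact (summable_geometric_two.sum_le_tsum _ fun k _ => by positivity).trans tsum_geometric_two.le

lemma sum_exp_neg_abs_le_four (s : Finset ℤ) : ∑ n ∈ s, exp (-|(n : ℝ)|) ≤ 4 := by
  have hterm : ∀ n : ℤ, exp (-|(n : ℝ)|) ≤ (1 / 2 : ℝ) ^ n.natAbs := fun n => by
    rw [← Int.cast_abs, ← Int.natCast_natAbs, Int.cast_natCast, neg_eq_neg_one_mul,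
      mul_comm, exp_nat_mul]
    exact pow_le_pow_left₀ (exp_pos _).le exp_neg_one_lt_half.le _
  calc ∑ n ∈ s, exp (-|(n : ℝ)|) ≤ ∑ n ∈ s, (1 / 2 : ℝ) ^ n.natAbs := sum_le_sum fun n _ => hterm n
    _ = ∑ n ∈ s with 0 ≤ n, (1 / 2 : ℝ) ^ n.natAbs + ∑ n ∈ s with ¬ 0 ≤ n, (1 / 2 : ℝ) ^ n.natAbs :=
      (sum_filter_add_sum_filter_not _ _ _).symm
    _ ≤ 2 + 2 := by
      gcongr <;> refine sum_half_pow_natAbs_le_two fun a ha b hb hab => ?_ <;>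
        rw [mem_coe, mem_filter] at ha hb <;> omega
    _ = 4 := by norm_num

lemma half_add_abs_add_abs_le_mul_sqNorm {β : ℝ} (hβ : 2 ≤ β) {y : ℤ × ℤ} (hy : y ≠ 0) :
    β / 2 + |(y.1 : ℝ)| + |(y.2 : ℝ)| ≤ β * sqNorm y := by
  have h1 := abs_intCast_le_sq y.1
  have h2 := abs_intCast_le_sq y.2
  have h3 := one_le_sqNorm hy
  unfold sqNorm at h3 ⊢
  nlinarith

lemma sum_exp_neg_mul_sqNorm_le {β : ℝ} (hβ : 2 ≤ β) (a b : Finset ℤ) :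
    ∑ y ∈ (a ×ˢ b).erase 0, exp (-(β * sqNorm y)) ≤ 16 * exp (-(β / 2)) := by
  calc ∑ y ∈ (a ×ˢ b).erase 0, exp (-(β * sqNorm y))
      ≤ ∑ y ∈ (a ×ˢ b).erase 0, exp (-(β / 2)) * (exp (-|(y.1 : ℝ)|) * exp (-|(y.2 : ℝ)|)) := by
        refine sum_le_sum fun y hy => ?_
        rw [← exp_add, ← exp_add, exp_le_exp]
        linarith [half_add_abs_add_abs_le_mul_sqNorm hβ (ne_of_mem_erase hy)]
    _ ≤ ∑ y ∈ a ×ˢ b, exp (-(β / 2)) * (exp (-|(y.1 : ℝ)|) * exp (-|(y.2 : ℝ)|)) :=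
        sum_le_sum_of_subset_of_nonneg (erase_subset _ _) fun _ _ _ => by positivity
    _ = exp (-(β / 2)) * ((∑ m ∈ a, exp (-|(m : ℝ)|)) * ∑ n ∈ b, exp (-|(n : ℝ)|)) := by
        rw [← mul_sum, sum_mul_sum, sum_product]
    _ ≤ exp (-(β / 2)) * (4 * 4) := by
        refine mul_le_mul_of_nonneg_left ?_ (exp_pos _).le
        exact mul_le_mul (sum_exp_neg_abs_le_four a) (sum_exp_neg_abs_le_four b)
          (sum_nonneg fun _ _ => (exp_pos _).le) (by norm_num)
    _ = 16 * exp (-(β / 2)) := by ring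

lemma sum_exp_fourierTheta_le {L : ℕ} (hL : 0 < L) (φ : ℝ × ℝ → ℝ) {c δ ζ s t : ℝ}
    (hc : 0 ≤ c) (hζ : 0 ≤ ζ)
    (hsmall : ∀ θ, θ ≠ 0 → supNorm θ ≤ δ → c * sqNormR θ ≤ 1 - φ θ)
    (hlarge : ∀ θ, supNorm θ ≤ π → ¬ supNorm θ ≤ δ → ζ ≤ 1 - φ θ)
    (hβ : 2 ≤ s * c * (2 * π / L) ^ 2) (hst : s ≤ t) :
    ∑ y ∈ (Tset L).erase 0, exp (-(t * (1 - φ (fourierTheta L y))))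
      ≤ 16 * exp (-(s * c * (2 * π / L) ^ 2 / 2)) + L ^ 2 * exp (-(s * ζ)) := by
  have hs : 0 ≤ s := by
    by_contra! h
    nlinarith [mul_nonpos_of_nonpos_of_nonneg (mul_nonpos_of_nonpos_of_nonneg h.le hc)
      (sq_nonneg (2 * π / L))]
  have ht : 0 ≤ t := hs.trans hst
  rw [← sum_filter_add_sum_filter_not _ fun y => supNorm (fourierTheta L y) ≤ δ]
  refine add_le_add ?_ ?_
  · calc _ ≤ ∑ y ∈ (Tset L).erase 0 with supNorm (fourierTheta L y) ≤ δ,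
          exp (-(s * c * (2 * π / L) ^ 2 * sqNorm y)) := by
          refine sum_le_sum fun y hy => exp_le_exp.2 (neg_le_neg ?_)
          obtain ⟨hy0, hyδ⟩ := mem_filter.1 hy
          have hθ := hsmall _ (fourierTheta_ne_zero hL.ne' (ne_of_mem_erase hy0)) hyδ
          rw [sqNormR_fourierTheta] at hθ
          have : 0 ≤ c * ((2 * π / L) ^ 2 * sqNorm y) := by unfold sqNorm; positivity
          calc s * c * (2 * π / L) ^ 2 * sqNorm y = s * (c * ((2 * π / L) ^ 2 * sqNorm y)) := by
                ring
            _ ≤ t * (1 - φ (fourierTheta L y)) := mul_le_mul hst hθ this ht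
      _ ≤ ∑ y ∈ (Tset L).erase 0, exp (-(s * c * (2 * π / L) ^ 2 * sqNorm y)) :=
          sum_le_sum_of_subset_of_nonneg (filter_subset _ _) fun _ _ _ => (exp_pos _).le
      _ ≤ _ := sum_exp_neg_mul_sqNorm_le hβ _ _
  · calc _ ≤ ∑ y ∈ (Tset L).erase 0 with ¬ supNorm (fourierTheta L y) ≤ δ, exp (-(s * ζ)) := by
          refine sum_le_sum fun y hy => exp_le_exp.2 (neg_le_neg ?_)
          obtain ⟨hy0, hyδ⟩ := mem_filter.1 hy
          exact mul_le_mul hst (hlarge _ (supNorm_fourierTheta_le_pi hL (mem_of_mem_erase hy0)) hyδ)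
            hζ ht
      _ ≤ (Tset L).card * exp (-(s * ζ)) := by
          rw [sum_const, nsmul_eq_mul]
          gcongr
          exact (filter_subset _ _).trans (erase_subset _ _)
      _ = L ^ 2 * exp (-(s * ζ)) := by rw [card_Tset_natCast]; push_cast; ring

lemma CondP1.exists_quadratic_le_one_sub_phiOf {M : ℕ → ℕ} {q : ℕ → ℤ × ℤ → ℝ} {σ2 : ℝ}
    (hP1 : CondP1 M q σ2) (hσ : 0 ≤ σ2) :
    ∃ δ > 0, ∀ᶠ L in evenAtTop, ∀ θ : ℝ × ℝ, θ ≠ 0 → supNorm θ ≤ δ / M L →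
      σ2 * (M L : ℝ) ^ 2 / 4 * sqNormR θ ≤ 1 - phiOf (M L) (q L) θ := by
  obtain ⟨δ, hδ, hratio⟩ := hP1 (1 / 2) one_half_pos
  refine ⟨δ, hδ, hratio.mono fun L hL θ hθ hθδ => ?_⟩
  have hr := (hL θ hθ hθδ).1
  have hD : 0 ≤ σ2 * (M L : ℝ) ^ 2 * sqNormR θ / 2 := by unfold sqNormR; positivity
  -- the ratio exceeds `1/2`, so its denominator cannot be the junk value `0`
  have hD' : 0 < σ2 * (M L : ℝ) ^ 2 * sqNormR θ / 2 :=
    hD.lt_of_ne fun h => by rw [← h, div_zero] at hr; norm_num at hr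
  rw [lt_div_iff₀ hD'] at hr
  linarith

lemma CondP2.exists_pos_le_one_sub_phiOf {M : ℕ → ℕ} {q : ℕ → ℤ × ℤ → ℝ}
    (hP2 : CondP2 M q) (hP3 : CondP3 M q) {δ : ℝ} (hδ : 0 < δ) :
    ∃ ζ > 0, ∀ᶠ L in evenAtTop, ∀ θ : ℝ × ℝ, supNorm θ ≤ π → ¬ supNorm θ ≤ δ / M L →
      ζ ≤ 1 - phiOf (M L) (q L) θ := by
  obtain ⟨δ', hδ', ζ, hζ, hgap⟩ := hP2 δ hδ
  refine ⟨min ζ (1 / 2), lt_min hζ one_half_pos, ?_⟩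
  filter_upwards [hgap, hP3 (1 / 2) one_half_pos δ' hδ'] with L hnear hfar θ hθπ hθδ
  by_cases hθδ' : supNorm θ ≤ δ'
  · exact (min_le_left _ _).trans (hnear θ hθδ' hθδ).le
  · have := (abs_lt.1 (hfar θ hθπ hθδ')).2
    linarith [min_le_right ζ (1 / 2)]

lemma tendsto_div_of_tendsto_div_max {ι : Type*} {l : Filter ι} {u a b : ι → ℝ}
    (ha : ∀ᶠ i in l, 0 < a i) (h : Tendsto (fun i => u i / max (a i) (b i)) l atTop) :
    Tendsto (fun i => u i / a i) l atTop := by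
  refine tendsto_atTop_mono' l ?_ h
  filter_upwards [ha, h.eventually_ge_atTop 0] with i hai hui
  have hmax : 0 < max (a i) (b i) := lt_max_of_lt_left hai
  have hu : 0 ≤ u i := by simpa using (le_div_iff₀ hmax).1 hui
  exact div_le_div_of_nonneg_left hu hai (le_max_left _ _)

lemma tendsto_div_and_tendsto_div_log_of_tendsto_div_max {l : Filter ℕ} (hl : l ≤ atTop)
    {M : ℕ → ℕ} (hM : ∀ L, 0 < M L) {s : ℕ → ℝ}
    (h : Tendsto (fun L : ℕ => s L / max ((L : ℝ) ^ 2 / (M L : ℝ) ^ 2) (log L)) l atTop) :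
    Tendsto (fun L : ℕ => s L / ((L : ℝ) ^ 2 / (M L : ℝ) ^ 2)) l atTop ∧
      Tendsto (fun L : ℕ => s L / log L) l atTop := by
  refine ⟨tendsto_div_of_tendsto_div_max ?_ h,
    tendsto_div_of_tendsto_div_max ?_ (by simpa only [max_comm] using h)⟩
  · filter_upwards [(eventually_gt_atTop 0).filter_mono hl] with L hL
    have := hM L
    positivity
  · filter_upwards [(eventually_gt_atTop 1).filter_mono hl] with L hL
    exact log_pos (by exact_mod_cast hL)

lemma tendsto_sq_mul_exp_neg_mul_nhds_zero {l : Filter ℕ} (hl : l ≤ atTop) {s : ℕ → ℝ}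
    (hs : Tendsto (fun L => s L / log L) l atTop) {ζ : ℝ} (hζ : 0 < ζ) :
    Tendsto (fun L : ℕ => (L : ℝ) ^ 2 * exp (-(s L * ζ))) l (𝓝 0) := by
  have hlog : Tendsto (fun L : ℕ => log L) l atTop :=
    (tendsto_log_atTop.comp tendsto_natCast_atTop_atTop).mono_left hl
  have hexponent : Tendsto (fun L : ℕ => log L * (ζ * (s L / log L) - 2)) l atTop :=
    hlog.atTop_mul_atTop₀ (tendsto_atTop_add_const_right _ _ (hs.const_mul_atTop hζ))
  refine (tendsto_exp_neg_atTop_nhds_zero.comp hexponent).congr' ?_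
  filter_upwards [(eventually_gt_atTop 1).filter_mono hl] with L hL
  have hL' : (1 : ℝ) < L := by exact_mod_cast hL
  have hlogL : log L ≠ 0 := (log_pos hL').ne'
  calc exp (-(log L * (ζ * (s L / log L) - 2))) = exp (log L) * exp (log L) * exp (-(s L * ζ)) := by
        rw [← exp_add, ← exp_add]; congr 1; field_simp; ring
    _ = (L : ℝ) ^ 2 * exp (-(s L * ζ)) := by rw [exp_log (by linarith)]; ring

theorem uniform_on_torus_general (M : ℕ → ℕ) (q : ℕ → ℤ × ℤ → ℝ) (σ2 : ℝ) (hσ : 0 < σ2)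
    (hMeven : ∀ L : ℕ, Even (M L) ∧ 0 < M L)
    (hP1 : CondP1 M q σ2) (hP2 : CondP2 M q) (hP3 : CondP3 M q)
    (s : ℕ → ℝ)
    (hsL : Tendsto (fun L : ℕ => s L / max ((L : ℝ) ^ 2 / (M L : ℝ) ^ 2) (Real.log L))
      evenAtTop atTop) :
    ∀ ε > (0 : ℝ), ∀ᶠ L in evenAtTop, ∀ t : ℝ, s L ≤ t → ∀ x ∈ Tset L,
      ‖∑ y ∈ (Tset L).erase 0,
          (Real.exp (-(t * (1 - phiOf (M L) (q L) (fourierTheta L y)))) : ℂ) * eL L x y‖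
        < ε := by
  intro ε hε
  have hl : evenAtTop ≤ atTop := inf_le_left
  have hLpos : ∀ᶠ L in evenAtTop, 0 < L := (eventually_gt_atTop 0).filter_mono hl
  obtain ⟨δ, hδ, hsmall⟩ := hP1.exists_quadratic_le_one_sub_phiOf hσ.le
  obtain ⟨ζ, hζ, hlarge⟩ := hP2.exists_pos_le_one_sub_phiOf hP3 hδ
  obtain ⟨hscale, hsLog⟩ :=
    tendsto_div_and_tendsto_div_log_of_tendsto_div_max hl (fun L => (hMeven L).2) hsL
  set β : ℕ → ℝ := fun L => s L * (σ2 * (M L : ℝ) ^ 2 / 4) * (2 * π / L) ^ 2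
  have hβ : Tendsto β evenAtTop atTop := by
    refine (hscale.const_mul_atTop (by positivity : 0 < σ2 * π ^ 2)).congr' ?_
    filter_upwards [hLpos] with L hL
    have := (hMeven L).2
    simp only [β]
    field_simp
    ring
  have hbound : Tendsto (fun L : ℕ => 16 * exp (-(β L / 2)) + (L : ℝ) ^ 2 * exp (-(s L * ζ)))
      evenAtTop (𝓝 0) := by
    simpa using ((tendsto_exp_neg_atTop_nhds_zero.comp
      (hβ.atTop_div_const two_pos)).const_mul 16).add
      (tendsto_sq_mul_exp_neg_mul_nhds_zero hl hsLog hζ)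
  filter_upwards [hLpos, hsmall, hlarge, hβ.eventually_ge_atTop 2,
    hbound.eventually (gt_mem_nhds hε)] with L hL hsmallL hlargeL hβL hboundL t ht x _
  calc _ ≤ ∑ y ∈ (Tset L).erase 0, exp (-(t * (1 - phiOf (M L) (q L) (fourierTheta L y)))) :=
        (norm_sum_le _ _).trans_eq (sum_congr rfl fun y _ => norm_ofReal_exp_mul_eL _ _ _ _)
    _ ≤ 16 * exp (-(β L / 2)) + (L : ℝ) ^ 2 * exp (-(s L * ζ)) :=
        sum_exp_fourierTheta_le hL _ (by positivity) hζ.le hsmallL hlargeL hβL ht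
    _ < ε := hboundL

/-- Theorem 1.7 (uniformity on the torus): if (P0)–(P3) hold and
`s_L/((L²/M_L²) ∨ log L) → ∞`, then
`sup_{t ≥ s_L} sup_{x ∈ T_L} L²|P₀(Xᴸ_t = x) − L⁻²| → 0`, where by Fourier
inversion the latter quantity equals
`|∑_{y ∈ T'_L} exp(−t(1 − φ_{M_L}(2πy/L))) e^{2πi x·y/L}|`. -/
theorem uniform_on_torus (M : ℕ → ℕ) (q : ℕ → ℤ × ℤ → ℝ) (σ2 : ℝ) (hσ : 0 < σ2)
    (hMeven : ∀ L : ℕ, Even (M L) ∧ 0 < M L)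
    (hP0 : ∀ L : ℕ, Even L → 0 < L → CondP0 (M L) (q L))
    (hP1 : CondP1 M q σ2) (hP2 : CondP2 M q) (hP3 : CondP3 M q)
    (s : ℕ → ℝ) (hs : ∀ L, 0 < s L)
    (hsL : Tendsto (fun L : ℕ => s L / max ((L : ℝ) ^ 2 / (M L : ℝ) ^ 2) (Real.log L))
      evenAtTop atTop) :
    ∀ ε > (0 : ℝ), ∀ᶠ L in evenAtTop, ∀ t : ℝ, s L ≤ t → ∀ x ∈ Tset L,
      ‖∑ y ∈ (Tset L).erase 0,
          (Real.exp (-(t * (1 - phiOf (M L) (q L) (fourierTheta L y)))) : ℂ) * eL L x y‖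
        < ε :=
  uniform_on_torus_general M q σ2 hσ hMeven hP1 hP2 hP3 s hsL
end
end
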